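/- arXiv:2105.11788 — 4 statements merged into one kernel-verified Lean document; each statement's English description precedes it below -/
import Mathlib

section
/- Let (S, Act, →) be a labeled transition system, let π be a partition of S, and let R ⊆ S × S be a strong bisimulation with R ⊆ ind(π) (i.e., any two R-related states lie in the same block of π). Let C be a block of π, let a ∈ Act, and let π' be the split of π by pre_a(C). Then R ⊆ ind(π'), i.e., any two R-related states lie in the same block of π'. -/
def IsPartition {S : Type*} (π : Set (Set S)) : Prop :=
  (∀ B ∈ π, B.Nonempty) ∧
  (∀ B ∈ π, ∀ B' ∈ π, B ≠ B' → Disjoint B B') ∧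
  ⋃₀ π = Set.univ

def IsBisimulation {S Act : Type*} (Tr : S → Act → S → Prop) (R : S → S → Prop) : Prop :=
  Symmetric R ∧
  ∀ s t, R s t → ∀ (a : Act) (s' : S), Tr s a s' → ∃ t', Tr t a t' ∧ R s' t'

def ind {S : Type*} (π : Set (Set S)) : S → S → Prop :=
  fun s t => ∃ B ∈ π, s ∈ B ∧ t ∈ B

/-- `preA Tr a C` is the set of states that can reach `C` via an `a`-transition. -/
def preA {S Act : Type*} (Tr : S → Act → S → Prop) (a : Act) (C : Set S) : Set S :=
  {s | ∃ t ∈ C, Tr s a t}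

/-- The split of a partition `π` by a set `X`:
`{B ∩ X | B ∈ π} ∪ {B \ X | B ∈ π}` with empty sets removed. -/
def splitBy {S : Type*} (π : Set (Set S)) (X : Set S) : Set (Set S) :=
  ({B | ∃ B' ∈ π, B = B' ∩ X} ∪ {B | ∃ B' ∈ π, B = B' \ X}) \ {∅}

theorem bisimulation_preserved_by_split {S Act : Type*}
    (Tr : S → Act → S → Prop) (π : Set (Set S)) (hπ : IsPartition π)
    (R : S → S → Prop) (hR : IsBisimulation Tr R)
    (hsub : ∀ s t, R s t → ind π s t)
    (C : Set S) (hC : C ∈ π) (a : Act) :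
    ∀ s t, R s t → ind (splitBy π (preA Tr a C)) s t := by
  -- key lemma: R s t and s ∈ preA → t ∈ preA
  have key : ∀ s t, R s t → s ∈ preA Tr a C → t ∈ preA Tr a C := by
    intro s t hst hs
    obtain ⟨s', hs'C, hTr⟩ := hs
    obtain ⟨t', hTt, hR'⟩ := hR.2 s t hst a s' hTr
    obtain ⟨B, hB, hs'B, ht'B⟩ := hsub s' t' hR'
    have : B = C := by
      by_contra h
      exact (hπ.2.1 B hB C hC h).ne_of_mem hs'B hs'C rfl
    exact ⟨t', this ▸ ht'B, hTt⟩
  intro s t hst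
  obtain ⟨B, hB, hsB, htB⟩ := hsub s t hst
  by_cases hs : s ∈ preA Tr a C
  · have ht := key s t hst hs
    refine ⟨B ∩ preA Tr a C, ⟨Or.inl ⟨B, hB, rfl⟩, ?_⟩, ⟨hsB, hs⟩, ⟨htB, ht⟩⟩
    simp only [Set.mem_singleton_iff]
    exact fun h => absurd (h ▸ (⟨hsB, hs⟩ : s ∈ B ∩ preA Tr a C)) (Set.notMem_empty s)
  · have ht : t ∉ preA Tr a C := fun h => hs (key t s (hR.1 hst) h)
    refine ⟨B \ preA Tr a C, ⟨Or.inr ⟨B, hB, rfl⟩, ?_⟩, ⟨hsB, hs⟩, ⟨htB, ht⟩⟩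
    simp only [Set.mem_singleton_iff]
    exact fun h => absurd (h ▸ (⟨hsB, hs⟩ : s ∈ B \ preA Tr a C)) (Set.notMem_empty s)
end

section
/- Let (S, Act, →) be a labeled transition system and let π_0 and π be partitions of S such that: (i) π is a refinement of π_0; (ii) π is stable; and (iii) every strong bisimulation R with R ⊆ ind(π_0) satisfies R ⊆ ind(π). Then ind(π) is the coarsest bisimulation refining π_0: ind(π) is a strong bisimulation, ind(π) ⊆ ind(π_0), and every strong bisimulation R with R ⊆ ind(π_0) satisfies R ⊆ ind(π). -/
def Refines {S : Type*} (π' π : Set (Set S)) : Prop :=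
  ∀ B' ∈ π', ∃ B ∈ π, B' ⊆ B

def Reaches {S Act : Type*} (Tr : S → Act → S → Prop) (s : S) (a : Act) (U : Set S) : Prop :=
  ∃ t ∈ U, Tr s a t

def StableUnder {S Act : Type*} (Tr : S → Act → S → Prop) (V U : Set S) : Prop :=
  ∀ a : Act, (∀ s ∈ V, Reaches Tr s a U) ∨ (∀ s ∈ V, ¬ Reaches Tr s a U)

def PartitionStableUnder {S Act : Type*} (Tr : S → Act → S → Prop)
    (π : Set (Set S)) (U : Set S) : Prop :=
  ∀ B ∈ π, StableUnder Tr B U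

def StablePartition {S Act : Type*} (Tr : S → Act → S → Prop) (π : Set (Set S)) : Prop :=
  ∀ C ∈ π, PartitionStableUnder Tr π C

theorem stable_refinement_is_coarsest_bisimulation {S Act : Type*}
    (Tr : S → Act → S → Prop) (π₀ π : Set (Set S))
    (hπ₀ : IsPartition π₀) (hπ : IsPartition π)
    (href : Refines π π₀)
    (hstable : StablePartition Tr π)
    (hcoarse : ∀ R : S → S → Prop, IsBisimulation Tr R →
      (∀ s t, R s t → ind π₀ s t) → ∀ s t, R s t → ind π s t) :
    IsBisimulation Tr (ind π) ∧
    (∀ s t, ind π s t → ind π₀ s t) ∧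
    (∀ R : S → S → Prop, IsBisimulation Tr R →
      (∀ s t, R s t → ind π₀ s t) → ∀ s t, R s t → ind π s t) := by
  refine ⟨⟨?_, ?_⟩, ?_, hcoarse⟩
  · rintro s t ⟨B, hB, hs, ht⟩; exact ⟨B, hB, ht, hs⟩
  · rintro s t ⟨B, hB, hs, ht⟩ a s' hTr
    -- s' lies in some block C
    have hs'univ : s' ∈ ⋃₀ π := hπ.2.2 ▸ Set.mem_univ s'
    obtain ⟨C, hC, hs'C⟩ := hs'univ
    have hstab := hstable C hC B hB a
    rcases hstab with h | h
    · obtain ⟨t', ht'C, hTt⟩ := h t ht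
      exact ⟨t', hTt, C, hC, hs'C, ht'C⟩
    · exact absurd ⟨s', hs'C, hTr⟩ (h s hs)
  · rintro s t ⟨B, hB, hs, ht⟩
    obtain ⟨B0, hB0, hsub⟩ := href B hB
    exact ⟨B0, hB0, hsub hs, hsub ht⟩
end

section
/- Let n, p, z be natural numbers with p ≥ 1, and let l, l' : ℕ → ℕ be sequences such that l'_i ≤ l_i for all i < z. For i < z define c_i = 1 if l_i = 0 and c_i = 0 otherwise. Assume p + Σ_{i<z} l_i ≤ n and Σ_{i<z} c_i ≤ p + Σ_{i<z} (l_i + l'_i). Then z ≤ 3n − p. -/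
theorem bcrp_iteration_bound (n p z : ℕ) (l l' : ℕ → ℕ)
    (hp : 1 ≤ p)
    (hll' : ∀ i < z, l' i ≤ l i)
    (hblocks : p + ∑ i ∈ Finset.range z, l i ≤ n)
    (hunstable : (∑ i ∈ Finset.range z, if l i = 0 then 1 else 0) ≤
      p + ∑ i ∈ Finset.range z, (l i + l' i)) :
    z ≤ 3 * n - p := by
  have h1 : z ≤ (∑ i ∈ Finset.range z, if l i = 0 then 1 else 0) +
      ∑ i ∈ Finset.range z, l i := by
    calc z = ∑ _i ∈ Finset.range z, 1 := by simp
    _ ≤ ∑ i ∈ Finset.range z, ((if l i = 0 then 1 else 0) + l i) := by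
        apply Finset.sum_le_sum
        intro i _
        by_cases h : l i = 0 <;> simp [h] <;> omega
    _ = _ := Finset.sum_add_distrib
  have h2 : ∑ i ∈ Finset.range z, (l i + l' i) ≤ 2 * ∑ i ∈ Finset.range z, l i := by
    rw [Finset.sum_add_distrib, two_mul]
    gcongr with i hi
    exact hll' i (Finset.mem_range.mp hi)
  omega
end

section
/- Let (S, Act, →) be a labeled transition system, let π be a partition of S, and let R ⊆ S × S be a strong bisimulation with R ⊆ ind(π). Let C be a block of π, and for each block B of π fix a designated leader ℓ_B ∈ B. Let π' be obtained from π by replacing each block B by the two sets B_1 = {s ∈ B | for all a ∈ Act, s reaches C with a if and only if ℓ_B reaches C with a} and B_2 = B \ B_1, discarding empty sets. Then π' is a partition of S refining π, and R ⊆ ind(π'), i.e., any two R-related states lie in the same block of π'. -/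
/-- The part of block `B` that agrees with the leader `ℓ B` on which actions
reach the splitter `C`. -/
def leaderPart {S Act : Type*} (Tr : S → Act → S → Prop) (C : Set S)
    (ℓ : Set S → S) (B : Set S) : Set S :=
  {s ∈ B | ∀ a : Act, Reaches Tr s a C ↔ Reaches Tr (ℓ B) a C}

/-- The leader-based two-way split of `π` with respect to the splitter block `C`:
each block `B` is replaced by `leaderPart Tr C ℓ B` and its complement in `B`,
discarding empty sets. -/
def leaderSplit {S Act : Type*} (Tr : S → Act → S → Prop) (C : Set S)
    (ℓ : Set S → S) (π : Set (Set S)) : Set (Set S) :=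
  {X | ∃ B ∈ π, X = leaderPart Tr C ℓ B ∨ X = B \ leaderPart Tr C ℓ B} \ {∅}

theorem leader_split_refines_and_preserves_bisimulations {S Act : Type*}
    (Tr : S → Act → S → Prop) (π : Set (Set S)) (hπ : IsPartition π)
    (R : S → S → Prop) (hR : IsBisimulation Tr R)
    (hsub : ∀ s t, R s t → ind π s t)
    (C : Set S) (hC : C ∈ π)
    (ℓ : Set S → S) (hℓ : ∀ B ∈ π, ℓ B ∈ B) :
    IsPartition (leaderSplit Tr C ℓ π) ∧
    Refines (leaderSplit Tr C ℓ π) π ∧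
    (∀ s t, R s t → ind (leaderSplit Tr C ℓ π) s t) := by
  obtain ⟨hne, hdisj, hcov⟩ := hπ
  -- blocks with a common element are equal
  have hblk : ∀ B ∈ π, ∀ B' ∈ π, ∀ x, x ∈ B → x ∈ B' → B = B' := by
    intro B hB B' hB' x hx hx'
    by_contra h
    exact (hdisj B hB B' hB' h).le_bot ⟨hx, hx'⟩ |>.elim
  -- R-related states reach C together
  have hreach : ∀ s t, R s t → ∀ a, Reaches Tr s a C → Reaches Tr t a C := by
    intro s t hst a ⟨s', hs'C, hTr⟩
    obtain ⟨t', hTr', hR'⟩ := hR.2 s t hst a s' hTr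
    obtain ⟨B', hB', hs'B, ht'B⟩ := hsub s' t' hR'
    have := hblk C hC B' hB' s' hs'C hs'B
    exact ⟨t', this ▸ ht'B, hTr'⟩
  have hreach' : ∀ s t, R s t → ∀ a, Reaches Tr s a C ↔ Reaches Tr t a C :=
    fun s t hst a => ⟨hreach s t hst a, hreach t s (hR.1 hst) a⟩
  refine ⟨⟨?_, ?_, ?_⟩, ?_, ?_⟩
  · intro B hB
    exact Set.nonempty_iff_ne_empty.mpr hB.2
  · rintro X ⟨⟨B, hB, hX⟩, -⟩ X' ⟨⟨B', hB', hX'⟩, -⟩ hne'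
    by_cases hBB : B = B'
    · subst hBB
      rcases hX with rfl | rfl <;> rcases hX' with rfl | rfl
      · exact absurd rfl hne'
      · exact Set.disjoint_sdiff_right.mono_left (le_refl _)
      · exact Set.disjoint_sdiff_left
      · exact absurd rfl hne'
    · have hd := hdisj B hB B' hB' hBB
      have h1 : X ⊆ B := by
        rcases hX with rfl | rfl
        · exact fun x hx => hx.1
        · exact fun x hx => hx.1
      have h2 : X' ⊆ B' := by
        rcases hX' with rfl | rfl
        · exact fun x hx => hx.1
        · exact fun x hx => hx.1
      exact hd.mono h1 h2
  · apply Set.eq_univ_of_forall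
    intro s
    have hs : s ∈ ⋃₀ π := hcov ▸ Set.mem_univ s
    obtain ⟨B, hB, hsB⟩ := hs
    by_cases h : s ∈ leaderPart Tr C ℓ B
    · exact ⟨leaderPart Tr C ℓ B, ⟨⟨B, hB, Or.inl rfl⟩,
        fun he => (he ▸ h : s ∈ (∅ : Set S))⟩, h⟩
    · exact ⟨B \ leaderPart Tr C ℓ B, ⟨⟨B, hB, Or.inr rfl⟩,
        fun he => (he ▸ ⟨hsB, h⟩ : s ∈ (∅ : Set S))⟩, ⟨hsB, h⟩⟩
  · rintro X ⟨⟨B, hB, hX⟩, -⟩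
    refine ⟨B, hB, ?_⟩
    rcases hX with rfl | rfl
    · exact fun x hx => hx.1
    · exact fun x hx => hx.1
  · intro s t hst
    obtain ⟨B, hB, hsB, htB⟩ := hsub s t hst
    have key : s ∈ leaderPart Tr C ℓ B ↔ t ∈ leaderPart Tr C ℓ B := by
      constructor
      · intro h
        exact ⟨htB, fun a => (hreach' t s (hR.1 hst) a).trans (h.2 a)⟩
      · intro h
        exact ⟨hsB, fun a => (hreach' s t hst a).trans (h.2 a)⟩
    by_cases h : s ∈ leaderPart Tr C ℓ B
    · exact ⟨leaderPart Tr C ℓ B, ⟨⟨B, hB, Or.inl rfl⟩,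
        fun he => (he ▸ h : s ∈ (∅ : Set S))⟩, h, key.mp h⟩
    · exact ⟨B \ leaderPart Tr C ℓ B, ⟨⟨B, hB, Or.inr rfl⟩,
        fun he => (he ▸ ⟨hsB, h⟩ : s ∈ (∅ : Set S))⟩, ⟨hsB, h⟩,
        ⟨htB, fun ht => h (key.mpr ht)⟩⟩
end
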